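/- Let X be a real or complex Banach space with the Daugavet property, let Y be a Banach space, and let T : X → Y be a bounded linear operator such that T(B_X) is an SCD set. Then T is a strong Daugavet operator: for every x, y in the unit sphere S_X and every ε > 0, there is z ∈ S_X such that ‖x + z‖ ≥ 2 − ε and ‖T(y) − T(z)‖ < ε. -/

import Mathlib

set_option maxHeartbeats 1000000


open Bornology Metric Topology

/-- The slice of a set `A` determined by the functional `f` and `ε`:
`S(A,f,ε) = {x ∈ A | Re f(x) > sup_{a ∈ A} Re f(a) - ε}`. -/
def Slice (𝕜 : Type*) [RCLike 𝕜] {X : Type*} [SeminormedAddCommGroup X] [NormedSpace 𝕜 X]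
    (A : Set X) (f : X →L[𝕜] 𝕜) (ε : ℝ) : Set X :=
  {x ∈ A | sSup ((fun a => RCLike.re (f a)) '' A) - ε < RCLike.re (f x)}

/-- `S` is a slice of `A`. -/
def IsSlice (𝕜 : Type*) [RCLike 𝕜] {X : Type*} [SeminormedAddCommGroup X] [NormedSpace 𝕜 X]
    (A S : Set X) : Prop :=
  ∃ (f : X →L[𝕜] 𝕜) (ε : ℝ), 0 < ε ∧ S = Slice 𝕜 A f ε

/-- A countable family `V` of subsets of `A` is determining for `A`:
`A` is contained in the closed convex hull of any `B ⊆ A` meeting every `V n`. -/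
def Determining {X : Type*} [SeminormedAddCommGroup X] [NormedSpace ℝ X]
    (A : Set X) (V : ℕ → Set X) : Prop :=
  ∀ B ⊆ A, (∀ n, (B ∩ V n).Nonempty) → A ⊆ closure (convexHull ℝ B)

/-- `A` is a slicely countably determined set: there is a determining sequence of
slices of `A`. -/
def IsSCD (𝕜 : Type*) [RCLike 𝕜] {X : Type*} [SeminormedAddCommGroup X] [NormedSpace ℝ X]
    [NormedSpace 𝕜 X] (A : Set X) : Prop :=
  ∃ S : ℕ → Set X, (∀ n, IsSlice 𝕜 A (S n)) ∧ Determining A S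

/-- `X` has the Daugavet property: every rank-one operator `x ↦ f(x) • y`
satisfies the Daugavet equation `‖Id + T‖ = 1 + ‖T‖`. -/
def DaugavetProperty (𝕜 : Type*) [RCLike 𝕜] (X : Type*) [NormedAddCommGroup X]
    [NormedSpace 𝕜 X] : Prop :=
  ∀ (f : X →L[𝕜] 𝕜) (y : X),
    ‖ContinuousLinearMap.id 𝕜 X + f.smulRight y‖ = 1 + ‖f.smulRight y‖

section Aux

variable {𝕜 : Type*} [RCLike 𝕜] {X : Type*} [NormedAddCommGroup X] [NormedSpace 𝕜 X]

lemma sSup_re_image_closedBall_le (g : X →L[𝕜] 𝕜) :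
    sSup ((fun a => RCLike.re (g a)) '' Metric.closedBall (0 : X) 1) ≤ ‖g‖ := by
  apply Real.sSup_le
  · rintro r ⟨a, ha, rfl⟩
    have h1 : ‖a‖ ≤ 1 := by simpa [Metric.mem_closedBall, dist_zero_right] using ha
    calc RCLike.re (g a) ≤ ‖g a‖ := RCLike.re_le_norm _
      _ ≤ ‖g‖ * ‖a‖ := g.le_opNorm a
      _ ≤ ‖g‖ * 1 := by nlinarith [norm_nonneg g]
      _ = ‖g‖ := mul_one _
  · exact norm_nonneg g

lemma slice_point (hDP : DaugavetProperty 𝕜 X) (g : X →L[𝕜] 𝕜) (u : X) (hu : ‖u‖ = 1)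
    {α γ : ℝ} (hα : 0 < α) (hγ : 0 < γ) :
    ∃ z, z ∈ Slice 𝕜 (Metric.closedBall (0 : X) 1) g α ∧ 2 - γ < ‖u + z‖ := by
  by_cases hg : g = 0
  · refine ⟨u, ⟨by simp [hu], ?_⟩, ?_⟩
    · have himg : ((fun a => RCLike.re (g a)) '' Metric.closedBall (0 : X) 1) = {0} := by
        have h0 : (fun a : X => RCLike.re (g a)) = fun _ => (0 : ℝ) := by
          funext a; simp [hg]
        rw [h0]
        exact Set.Nonempty.image_const ⟨0, by simp⟩ 0
      rw [himg, csSup_singleton]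
      simp [hg]; linarith
    · have h2 : u + u = (2 : 𝕜) • u := (two_smul 𝕜 u).symm
      have h3 : ‖(2:𝕜) • u‖ = ‖(2:𝕜)‖ * ‖u‖ := norm_smul (2:𝕜) u
      have h4 : ‖(2:𝕜)‖ = 2 := by
        rw [show (2:𝕜) = ((2:ℝ):𝕜) by norm_cast, RCLike.norm_ofReal]; norm_num
      rw [h2, h3, h4, hu]
      linarith
  · have hgn : 0 < ‖g‖ := norm_pos_iff.2 hg
    set η : ℝ := min (γ / 2) (min (α / (‖g‖ + 1)) 2⁻¹) with hηdef
    have hη0 : 0 < η := by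
      apply lt_min (by linarith) (lt_min (by positivity) (by norm_num))
    have hηγ : η ≤ γ / 2 := min_le_left _ _
    have hηα : η ≤ α / (‖g‖ + 1) := le_trans (min_le_right _ _) (min_le_left _ _)
    have hη2 : η ≤ 2⁻¹ := le_trans (min_le_right _ _) (min_le_right _ _)
    set gN : X →L[𝕜] 𝕜 := (((‖g‖⁻¹ : ℝ) : 𝕜)) • g with hgNdef
    have hgN : ‖gN‖ = 1 := by
      have h1 : ‖(((‖g‖⁻¹ : ℝ) : 𝕜)) • g‖ = ‖(((‖g‖⁻¹ : ℝ) : 𝕜))‖ * ‖g‖ := norm_smul (((‖g‖⁻¹ : ℝ) : 𝕜)) g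
      rw [hgNdef, h1]
      rw [RCLike.norm_ofReal, abs_of_nonneg (by positivity)]
      field_simp
    have hA : ‖ContinuousLinearMap.id 𝕜 X + gN.smulRight u‖ = 2 := by
      rw [hDP gN u, ContinuousLinearMap.norm_smulRight_apply, hgN, hu]; ring
    have h2 : (2 : ℝ) - η < ‖ContinuousLinearMap.id 𝕜 X + gN.smulRight u‖ := by
      rw [hA]; linarith
    obtain ⟨p, hp1, hp2⟩ := ContinuousLinearMap.exists_lt_apply_of_lt_opNorm _ h2
    rw [ContinuousLinearMap.add_apply, ContinuousLinearMap.id_apply,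
      ContinuousLinearMap.smulRight_apply] at hp2
    have hcle : ‖gN p‖ ≤ 1 := by
      calc ‖gN p‖ ≤ ‖gN‖ * ‖p‖ := gN.le_opNorm p
        _ ≤ 1 * 1 := by rw [hgN]; nlinarith [norm_nonneg p]
        _ = 1 := one_mul 1
    have hclb : 1 - η < ‖gN p‖ := by
      have h4 : ‖gN p • u‖ = ‖gN p‖ * ‖u‖ := norm_smul (gN p) u
      have h3 : ‖p + gN p • u‖ ≤ ‖p‖ + ‖gN p‖ := by
        calc ‖p + gN p • u‖ ≤ ‖p‖ + ‖gN p • u‖ := norm_add_le _ _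
          _ = ‖p‖ + ‖gN p‖ := by rw [h4, hu, mul_one]
      linarith
    have hc0 : gN p ≠ 0 := by
      intro h; rw [h] at hclb; simp at hclb; linarith
    have hcn0 : ‖gN p‖ ≠ 0 := norm_ne_zero_iff.2 hc0
    set θ : 𝕜 := (starRingEnd 𝕜) (gN p) / ((‖gN p‖ : ℝ) : 𝕜) with hθdef
    have hθ : ‖θ‖ = 1 := by
      rw [hθdef, norm_div, RCLike.norm_conj, RCLike.norm_ofReal, abs_of_nonneg (norm_nonneg _)]
      field_simp
    have hθc : θ * gN p = ((‖gN p‖ : ℝ) : 𝕜) := by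
      rw [hθdef, div_mul_eq_mul_div, RCLike.conj_mul]
      rw [show ((‖gN p‖ : ℝ) : 𝕜) ^ 2 = (((‖gN p‖ ^ 2 : ℝ)) : 𝕜) by norm_cast]
      rw [div_eq_iff (by exact_mod_cast hcn0)]
      norm_cast
      ring
    have hgNz : gN (θ • p) = ((‖gN p‖ : ℝ) : 𝕜) := by
      rw [map_smul, smul_eq_mul, hθc]
    refine ⟨θ • p, ⟨?_, ?_⟩, ?_⟩
    · have h5 : ‖θ • p‖ = ‖θ‖ * ‖p‖ := norm_smul θ p
      simp only [Metric.mem_closedBall, dist_zero_right, h5, hθ, one_mul]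
      linarith
    · -- slice inequality
      have hne : ((‖g‖ : ℝ) : 𝕜) ≠ 0 := by
        simp only [ne_eq, RCLike.ofReal_eq_zero]
        exact ne_of_gt hgn
      have h5 : gN (θ • p) = ((‖g‖⁻¹ : ℝ) : 𝕜) * g (θ • p) := by
        rw [hgNdef]; rfl
      have h6 : g (θ • p) = ((‖g‖ * ‖gN p‖ : ℝ) : 𝕜) := by
        have h7 := hgNz
        rw [h5] at h7
        have h8 := congrArg (fun t => ((‖g‖ : ℝ) : 𝕜) * t) h7
        simp only [← mul_assoc] at h8
        rw [show ((‖g‖ : ℝ) : 𝕜) * ((‖g‖⁻¹ : ℝ) : 𝕜) = ((‖g‖ * ‖g‖⁻¹ : ℝ) : 𝕜) by norm_cast] at h8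
        rw [mul_inv_cancel₀ (ne_of_gt hgn)] at h8
        simp only [RCLike.ofReal_one, one_mul] at h8
        rw [h8]
        norm_cast
      have hre : RCLike.re (g (θ • p)) = ‖g‖ * ‖gN p‖ := by
        rw [h6, RCLike.ofReal_re]
      rw [hre]
      have hsup := sSup_re_image_closedBall_le g
      have hgη : ‖g‖ * η < α := by
        have hb : ‖g‖ * η ≤ ‖g‖ * (α / (‖g‖ + 1)) := by nlinarith
        have hb2 : ‖g‖ * (α / (‖g‖ + 1)) < α := by
          rw [mul_div_assoc']
          rw [div_lt_iff₀ (by linarith)]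
          nlinarith
        linarith
      nlinarith
    · -- norm inequality
      have hkey : θ • p + ((‖gN p‖ : ℝ) : 𝕜) • u = θ • (p + gN p • u) := by
        rw [smul_add, smul_smul, hθc]
      have hn0 : ‖θ • (p + gN p • u)‖ = ‖θ‖ * ‖p + gN p • u‖ := norm_smul θ (p + gN p • u)
      have hn1 : ‖θ • p + ((‖gN p‖ : ℝ) : 𝕜) • u‖ = ‖p + gN p • u‖ := by
        rw [hkey, hn0, hθ, one_mul]
      have hn2 : ‖((‖gN p‖ : ℝ) : 𝕜) • u - u‖ < η := by
        have he : ((‖gN p‖ : ℝ) : 𝕜) • u - u = ((((‖gN p‖ - 1 : ℝ)) : 𝕜)) • u := by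
          rw [show (((‖gN p‖ - 1 : ℝ)) : 𝕜) = ((‖gN p‖ : ℝ) : 𝕜) - 1 by norm_cast]
          rw [sub_smul, one_smul]
        have he2 : ‖((((‖gN p‖ - 1 : ℝ)) : 𝕜)) • u‖ = ‖(((‖gN p‖ - 1 : ℝ)) : 𝕜)‖ * ‖u‖ :=
          norm_smul (((‖gN p‖ - 1 : ℝ) : 𝕜)) u
        rw [he, he2, hu, mul_one, RCLike.norm_ofReal, abs_of_nonpos (by linarith)]
        linarith
      have htri : ‖θ • p + ((‖gN p‖ : ℝ) : 𝕜) • u‖ - ‖((‖gN p‖ : ℝ) : 𝕜) • u - u‖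
          ≤ ‖u + θ • p‖ := by
        have heq : (θ • p + ((‖gN p‖ : ℝ) : 𝕜) • u) - (((‖gN p‖ : ℝ) : 𝕜) • u - u)
            = u + θ • p := by abel
        calc ‖θ • p + ((‖gN p‖ : ℝ) : 𝕜) • u‖ - ‖((‖gN p‖ : ℝ) : 𝕜) • u - u‖
            ≤ ‖(θ • p + ((‖gN p‖ : ℝ) : 𝕜) • u) - (((‖gN p‖ : ℝ) : 𝕜) • u - u)‖ :=
              norm_sub_norm_le _ _
          _ = ‖u + θ • p‖ := by rw [heq]
      rw [hn1] at htri
      linarith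

end Aux

/-- Let `X` be a Banach space with the Daugavet property, `Y` a Banach
space and `T : X → Y` a bounded linear operator such that `T(B_X)` is an SCD set. Then
`T` is a strong Daugavet operator: for all norm-one `x, y ∈ X` and `ε > 0` there is a
norm-one `z` with `‖x + z‖ ≥ 2 - ε` and `‖T y - T z‖ < ε`. -/
theorem statement18 {𝕜 : Type*} [RCLike 𝕜] {X : Type*} [NormedAddCommGroup X]
    [NormedSpace ℝ X] [NormedSpace 𝕜 X] [IsScalarTower ℝ 𝕜 X] [CompleteSpace X]
    {Y : Type*} [NormedAddCommGroup Y] [NormedSpace ℝ Y] [NormedSpace 𝕜 Y]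
    [IsScalarTower ℝ 𝕜 Y] [CompleteSpace Y]
    (hDP : DaugavetProperty 𝕜 X)
    (T : X →L[𝕜] Y) (hSCD : IsSCD 𝕜 (T '' Metric.closedBall (0 : X) 1)) :
    ∀ x y : X, ‖x‖ = 1 → ‖y‖ = 1 → ∀ ε : ℝ, 0 < ε →
      ∃ z : X, ‖z‖ = 1 ∧ 2 - ε ≤ ‖x + z‖ ∧ ‖T y - T z‖ < ε := by
  classical
  intro x y hx hy ε hε
  obtain ⟨S, hSl, hDet⟩ := hSCD
  choose g εs hεpos hSeq using hSl
  set δ : ℝ := min (min (ε / 8) (ε / (8 * (‖T‖ + 1)))) (1 / 4) with hδdef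
  have hδ0 : 0 < δ := by
    apply lt_min (lt_min (by linarith) (by positivity)) (by norm_num)
  have hδ1 : δ ≤ ε / 8 := le_trans (min_le_left _ _) (min_le_left _ _)
  have hδ2 : δ ≤ ε / (8 * (‖T‖ + 1)) := le_trans (min_le_left _ _) (min_le_right _ _)
  have hδ3 : δ ≤ 1 / 4 := min_le_right _ _
  -- the one-step construction
  have stepEx : ∀ (k : ℕ) (w : X) (β : ℝ), ∃ q : X × ℝ × X,
      1 ≤ ‖w‖ → 0 < β →
      (q.2.2 ∈ Slice 𝕜 (Metric.closedBall (0 : X) 1) ((g k).comp T) (εs k) ∧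
       1 ≤ ‖q.1‖ ∧ 0 < q.2.1 ∧
       ∀ f : X →L[𝕜] 𝕜, ‖f‖ ≤ 1 → ‖q.1‖ - q.2.1 < RCLike.re (f q.1) →
         (1 - δ < RCLike.re (f q.2.2) ∧ ‖w‖ - β < RCLike.re (f w))) := by
    intro k w β
    by_cases hwβ : 1 ≤ ‖w‖ ∧ 0 < β
    · obtain ⟨hw, hβ⟩ := hwβ
      have hw0 : (0 : ℝ) < ‖w‖ := by linarith
      have hwne : ‖w‖ ≠ 0 := ne_of_gt hw0
      set γ : ℝ := min δ (β / (2 * ‖w‖)) / 2 with hγdef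
      have hγ0 : 0 < γ := by
        apply div_pos (lt_min hδ0 (by positivity)) (by norm_num)
      have hγδ : 2 * γ ≤ δ := by
        have := min_le_left δ (β / (2 * ‖w‖)); rw [hγdef]; linarith
      have hγβ : 2 * γ * ‖w‖ ≤ β / 2 := by
        have h1 : 2 * γ ≤ β / (2 * ‖w‖) := by
          have := min_le_right δ (β / (2 * ‖w‖)); rw [hγdef]; linarith
        have h2 : 2 * γ * ‖w‖ ≤ (β / (2 * ‖w‖)) * ‖w‖ := by nlinarith
        have h3 : (β / (2 * ‖w‖)) * ‖w‖ = β / 2 := by field_simp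
        linarith [h3 ▸ h2]
      set u : X := ‖w‖⁻¹ • w with hudef
      have hu : ‖u‖ = 1 := by
        rw [hudef, norm_smul, Real.norm_eq_abs, abs_of_nonneg (by positivity),
          inv_mul_cancel₀ hwne]
      obtain ⟨z, hzS, hzn⟩ := slice_point hDP ((g k).comp T) u hu (hεpos k) hγ0
      have hz1 : ‖z‖ ≤ 1 := by
        have := hzS.1; simpa [Metric.mem_closedBall, dist_zero_right] using this
      refine ⟨(u + z, γ, z), fun _ _ => ⟨hzS, ?_, hγ0, ?_⟩⟩
      · have : 2 - γ < ‖u + z‖ := hzn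
        have hγ1 : γ ≤ 1 / 8 := by linarith
        linarith
      · intro f hf1 hf2
        simp only at hf2
        have hfu : RCLike.re (f u) ≤ 1 := by
          calc RCLike.re (f u) ≤ ‖f u‖ := RCLike.re_le_norm _
            _ ≤ ‖f‖ * ‖u‖ := f.le_opNorm u
            _ ≤ 1 := by rw [hu, mul_one]; exact hf1
        have hfz : RCLike.re (f z) ≤ 1 := by
          calc RCLike.re (f z) ≤ ‖f z‖ := RCLike.re_le_norm _
            _ ≤ ‖f‖ * ‖z‖ := f.le_opNorm z
            _ ≤ 1 := by nlinarith [norm_nonneg z, norm_nonneg f]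
        have hsum : RCLike.re (f (u + z)) = RCLike.re (f u) + RCLike.re (f z) := by
          rw [map_add, map_add]
        constructor
        · -- 1 - δ < re (f z)
          have : 1 - 2 * γ < RCLike.re (f z) := by
            have h1 : ‖u + z‖ - γ < RCLike.re (f u) + RCLike.re (f z) := by
              rw [← hsum]; exact hf2
            linarith [hzn]
          linarith
        · -- ‖w‖ - β < re (f w)
          have hfu' : 1 - 2 * γ < RCLike.re (f u) := by
            have h1 : ‖u + z‖ - γ < RCLike.re (f u) + RCLike.re (f z) := by
              rw [← hsum]; exact hf2
            linarith [hzn]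
          have hwu : ‖w‖ • u = w := by
            rw [hudef, smul_smul, mul_inv_cancel₀ hwne, one_smul]
          have hfw : RCLike.re (f w) = ‖w‖ * RCLike.re (f u) := by
            conv_lhs => rw [← hwu]
            rw [ContinuousLinearMap.map_smul_of_tower, RCLike.smul_re]
          rw [hfw]
          nlinarith
    · exact ⟨(x, 1, x), fun h1 h2 => absurd ⟨h1, h2⟩ hwβ⟩
  choose stepF stepSpec using stepEx
  -- the recursively defined sequence of states
  obtain ⟨G, hG0, hGs⟩ : ∃ G : ℕ → X × ℝ, G 0 = (x, δ) ∧
      ∀ n, G (n + 1) = ((stepF n (G n).1 (G n).2).1, (stepF n (G n).1 (G n).2).2.1) :=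
    ⟨fun n => Nat.rec ((x, δ) : X × ℝ)
      (fun k p => ((stepF k p.1 p.2).1, (stepF k p.1 p.2).2.1)) n, rfl, fun n => rfl⟩
  set Z : ℕ → X := fun n => (stepF n (G n).1 (G n).2).2.2 with hZdef
  have hInv : ∀ n, 1 ≤ ‖(G n).1‖ ∧ 0 < (G n).2 := by
    intro n
    induction n with
    | zero => rw [hG0]; exact ⟨le_of_eq hx.symm, hδ0⟩
    | succ k ih =>
      have hs := stepSpec k (G k).1 (G k).2 ih.1 ih.2
      rw [hGs k]
      exact ⟨hs.2.1, hs.2.2.1⟩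
  have hSpec : ∀ n, Z n ∈ Slice 𝕜 (Metric.closedBall (0 : X) 1) ((g n).comp T) (εs n) ∧
      ∀ f : X →L[𝕜] 𝕜, ‖f‖ ≤ 1 →
        ‖(G (n + 1)).1‖ - (G (n + 1)).2 < RCLike.re (f (G (n + 1)).1) →
        (1 - δ < RCLike.re (f (Z n)) ∧ ‖(G n).1‖ - (G n).2 < RCLike.re (f (G n).1)) := by
    intro n
    have hs := stepSpec n (G n).1 (G n).2 (hInv n).1 (hInv n).2
    refine ⟨hs.1, fun f hf1 hf2 => ?_⟩
    rw [hGs n] at hf2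
    exact hs.2.2.2 f hf1 hf2
  have hChain : ∀ (M : ℕ) (f : X →L[𝕜] 𝕜), ‖f‖ ≤ 1 →
      ‖(G M).1‖ - (G M).2 < RCLike.re (f (G M).1) →
      (∀ k < M, 1 - δ < RCLike.re (f (Z k))) ∧ 1 - δ < RCLike.re (f x) := by
    intro M
    induction M with
    | zero =>
      intro f hf1 hf2
      rw [hG0] at hf2
      simp only [hx] at hf2
      exact ⟨fun k hk => absurd hk (Nat.not_lt_zero k), hf2⟩
    | succ m ih =>
      intro f hf1 hf2
      obtain ⟨hzm, hGm⟩ := (hSpec m).2 f hf1 hf2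
      obtain ⟨hall, hx0⟩ := ih f hf1 hGm
      refine ⟨fun k hk => ?_, hx0⟩
      rcases Nat.lt_succ_iff_lt_or_eq.1 hk with h | h
      · exact hall k h
      · rw [h]; exact hzm
  -- apply the determining property
  have hZball : ∀ n, Z n ∈ Metric.closedBall (0 : X) 1 := fun n => (hSpec n).1.1
  have hZslice : ∀ n, T (Z n) ∈ S n := by
    intro n
    rw [hSeq n]
    refine ⟨⟨Z n, hZball n, rfl⟩, ?_⟩
    have himg : ((fun a => RCLike.re ((g n) a)) '' (T '' Metric.closedBall (0 : X) 1)) =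
        ((fun a => RCLike.re (((g n).comp T) a)) '' Metric.closedBall (0 : X) 1) := by
      rw [Set.image_image]; rfl
    rw [himg]
    exact (hSpec n).1.2
  have hsub : T '' Metric.closedBall (0 : X) 1 ⊆
      closure (convexHull ℝ (Set.range fun n => T (Z n))) := by
    apply hDet
    · rintro _ ⟨n, rfl⟩; exact ⟨Z n, hZball n, rfl⟩
    · intro n; exact ⟨T (Z n), ⟨n, rfl⟩, hZslice n⟩
  have hTy : T y ∈ closure (convexHull ℝ (Set.range fun n => T (Z n))) :=
    hsub ⟨y, by simp [hy], rfl⟩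
  rw [Metric.mem_closure_iff] at hTy
  obtain ⟨p, hp, hpd⟩ := hTy (ε / 2) (by positivity)
  rw [convexHull_eq] at hp
  obtain ⟨ι, t, wgt, zf, hw0, hw1, hzB, hcm⟩ := hp
  -- indices
  set kk : ι → ℕ := fun i => if h : ∃ m, T (Z m) = zf i then h.choose else 0 with hkk
  have hTv : ∀ i ∈ t, T (Z (kk i)) = zf i := by
    intro i hi
    have h : ∃ m, T (Z m) = zf i := hzB i hi
    simp only [hkk, dif_pos h]
    exact h.choose_spec
  set M : ℕ := t.sup kk + 1 with hM
  -- the norming functional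
  have hwM0 : (G M).1 ≠ 0 := by
    intro h
    have := (hInv M).1
    rw [h, norm_zero] at this
    linarith
  obtain ⟨f, hf1, hf2⟩ := exists_dual_vector 𝕜 (G M).1 (norm_ne_zero_iff.2 hwM0)
  have hfmem : ‖(G M).1‖ - (G M).2 < RCLike.re (f (G M).1) := by
    rw [hf2, RCLike.ofReal_re]
    linarith [(hInv M).2]
  obtain ⟨hfZ, hfx⟩ := hChain M f (le_of_eq hf1) hfmem
  -- the convex combination in X
  set u : X := ∑ i ∈ t, wgt i • Z (kk i) with hudef
  have hTu : T u = p := by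
    rw [hudef, map_sum, ← hcm, Finset.centerMass_eq_of_sum_1 _ _ hw1]
    exact Finset.sum_congr rfl fun i hi => by
      rw [ContinuousLinearMap.map_smul_of_tower, hTv i hi]
  have hZn1 : ∀ n, ‖Z n‖ ≤ 1 := by
    intro n
    have := hZball n
    simpa [Metric.mem_closedBall, dist_zero_right] using this
  have hun : ‖u‖ ≤ 1 := by
    calc ‖u‖ ≤ ∑ i ∈ t, ‖wgt i • Z (kk i)‖ := norm_sum_le _ _
      _ ≤ ∑ i ∈ t, wgt i := by
        apply Finset.sum_le_sum
        intro i hi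
        rw [norm_smul, Real.norm_eq_abs, abs_of_nonneg (hw0 i hi)]
        nlinarith [hZn1 (kk i), hw0 i hi]
      _ = 1 := hw1
  have hkkM : ∀ i ∈ t, kk i < M := by
    intro i hi
    rw [hM]
    exact Nat.lt_succ_of_le (Finset.le_sup hi)
  have hfu : 1 - δ ≤ RCLike.re (f u) := by
    have hre : RCLike.re (f u) = ∑ i ∈ t, wgt i * RCLike.re (f (Z (kk i))) := by
      rw [hudef, map_sum, map_sum]
      exact Finset.sum_congr rfl fun i hi => by
        rw [ContinuousLinearMap.map_smul_of_tower, RCLike.smul_re]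
    rw [hre]
    calc (1 : ℝ) - δ = ∑ i ∈ t, wgt i * (1 - δ) := by
          rw [← Finset.sum_mul, hw1, one_mul]
      _ ≤ ∑ i ∈ t, wgt i * RCLike.re (f (Z (kk i))) := by
          apply Finset.sum_le_sum
          intro i hi
          exact mul_le_mul_of_nonneg_left (le_of_lt (hfZ (kk i) (hkkM i hi))) (hw0 i hi)
  have hxu : 2 - 2 * δ < ‖x + u‖ := by
    have h1 : RCLike.re (f (x + u)) = RCLike.re (f x) + RCLike.re (f u) := by
      rw [map_add, map_add]
    have h2 : RCLike.re (f (x + u)) ≤ ‖x + u‖ := by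
      calc RCLike.re (f (x + u)) ≤ ‖f (x + u)‖ := RCLike.re_le_norm _
        _ ≤ ‖f‖ * ‖x + u‖ := f.le_opNorm _
        _ = ‖x + u‖ := by rw [hf1, one_mul]
    linarith
  have hu1 : 1 - 2 * δ < ‖u‖ := by
    have := norm_add_le x u
    rw [hx] at this
    linarith
  have hu0 : u ≠ 0 := by
    intro h
    rw [h, norm_zero] at hu1
    linarith
  have hune : ‖u‖ ≠ 0 := by
    intro h; rw [h] at hu1; linarith
  refine ⟨‖u‖⁻¹ • u, ?_, ?_, ?_⟩
  · rw [norm_smul, Real.norm_eq_abs, abs_of_nonneg (by positivity), inv_mul_cancel₀ hune]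
  · -- 2 - ε ≤ ‖x + z‖
    have hzu : ‖‖u‖⁻¹ • u - u‖ ≤ 2 * δ := by
      have he : ‖u‖⁻¹ • u - u = (‖u‖⁻¹ - 1) • u := by rw [sub_smul, one_smul]
      rw [he, norm_smul, Real.norm_eq_abs]
      have hup : (0:ℝ) < ‖u‖ := by linarith
      have hinv : 1 ≤ ‖u‖⁻¹ := (one_le_inv₀ hup).mpr hun
      rw [abs_of_nonneg (by linarith)]
      have hcalc : (‖u‖⁻¹ - 1) * ‖u‖ = 1 - ‖u‖ := by field_simp
      rw [hcalc]
      linarith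
    have htri : ‖x + u‖ ≤ ‖x + ‖u‖⁻¹ • u‖ + ‖‖u‖⁻¹ • u - u‖ := by
      have heq : (x + ‖u‖⁻¹ • u) - (‖u‖⁻¹ • u - u) = x + u := by abel
      calc ‖x + u‖ = ‖(x + ‖u‖⁻¹ • u) - (‖u‖⁻¹ • u - u)‖ := by rw [heq]
        _ ≤ _ := norm_sub_le _ _
    have hδε : 4 * δ ≤ ε / 2 := by linarith
    linarith
  · -- ‖T y - T z‖ < ε
    have hzu : ‖u - ‖u‖⁻¹ • u‖ ≤ 2 * δ := by
      have he : u - ‖u‖⁻¹ • u = (1 - ‖u‖⁻¹) • u := by rw [sub_smul, one_smul]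
      rw [he, norm_smul, Real.norm_eq_abs]
      have hup : (0:ℝ) < ‖u‖ := by linarith
      have hinv : 1 ≤ ‖u‖⁻¹ := (one_le_inv₀ hup).mpr hun
      rw [abs_of_nonpos (by linarith)]
      have hcalc : -(1 - ‖u‖⁻¹) * ‖u‖ = 1 - ‖u‖ := by field_simp; ring
      rw [hcalc]
      linarith
    have h1 : ‖T y - T u‖ < ε / 2 := by
      rw [← hTu] at hpd
      rw [dist_eq_norm] at hpd
      exact hpd
    have h2 : ‖T u - T (‖u‖⁻¹ • u)‖ ≤ ‖T‖ * (2 * δ) := by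
      calc ‖T u - T (‖u‖⁻¹ • u)‖ = ‖T (u - ‖u‖⁻¹ • u)‖ := by rw [map_sub]
        _ ≤ ‖T‖ * ‖u - ‖u‖⁻¹ • u‖ := T.le_opNorm _
        _ ≤ ‖T‖ * (2 * δ) := by nlinarith [norm_nonneg T]
    have h3 : ‖T‖ * (2 * δ) ≤ ε / 4 := by
      have h4 : δ * (8 * (‖T‖ + 1)) ≤ ε := by
        rw [← le_div_iff₀ (by positivity)]
        exact hδ2
      nlinarith [norm_nonneg T, hδ0.le]
    calc ‖T y - T (‖u‖⁻¹ • u)‖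
        ≤ ‖T y - T u‖ + ‖T u - T (‖u‖⁻¹ • u)‖ := by
          have heq : T y - T (‖u‖⁻¹ • u) = (T y - T u) + (T u - T (‖u‖⁻¹ • u)) := by abel
          rw [heq]; exact norm_add_le _ _
      _ < ε / 2 + ε / 4 := by linarith
      _ < ε := by linarith
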